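/- arXiv:1211.2145 — 3 statements merged into one kernel-verified Lean document; each statement's English description precedes it below -/
import Mathlib

section
/- Let 𝔨 be a finite-dimensional real Lie algebra equipped with an ad-invariant inner product (so 𝔨 is of compact type), and let 𝔥 ⊆ 𝔨 be a Cartan subalgebra. Let u : 𝔨 → 𝔨 be a continuous map satisfying ⁅u(X), X⁆ = 0 for every X ∈ 𝔨. Then u maps 𝔥 into itself: u(𝔥) ⊆ 𝔥. -/
/-!
Ad-invariance makes every `ad h` skew-adjoint. For `h ∈ 𝔥`, `ad h` is nilpotent on `𝔥` and skew,
hence zero there; so `𝔥` is abelian, a linear subspace, and its own centralizer, and the commuting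
skew operators `ad h` (`h ∈ 𝔥`) have no common kernel on `𝔥ᗮ`. Splitting `𝔥ᗮ` along kernels of
these operators shows that the `h` for which `ad h` is not injective on `𝔥ᗮ` lie in finitely many
proper subspaces of `𝔥`. For every other `h ∈ 𝔥`, `⁅u h, h⁆ = 0` forces `u h ∈ 𝔥`, and such `h`
are dense in `𝔥`, so continuity of `u` finishes the proof.
-/

open scoped RealInnerProductSpace InnerProductSpace
open Module Set Filter Topology

namespace Submodule

variable {K M : Type*} [Field K] [AddCommGroup M] [Module K M]

def IsThin (p : Submodule K M) (s : Set M) : Prop :=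
  ∃ S : Finset (Submodule K M), (∀ V ∈ S, ¬ p ≤ V) ∧ s ⊆ ⋃ V ∈ S, (V : Set M)

variable {p : Submodule K M} {s t : Set M}

lemma isThin_empty : p.IsThin ∅ := ⟨∅, by simp, empty_subset _⟩

lemma IsThin.mono (hs : p.IsThin s) (hts : t ⊆ s) : p.IsThin t := by
  obtain ⟨S, hSp, hsS⟩ := hs
  exact ⟨S, hSp, hts.trans hsS⟩

lemma IsThin.union (hs : p.IsThin s) (ht : p.IsThin t) : p.IsThin (s ∪ t) := by
  classical
  obtain ⟨S, hSp, hsS⟩ := hs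
  obtain ⟨T, hTp, htT⟩ := ht
  refine ⟨S ∪ T, fun V hV ↦ (Finset.mem_union.1 hV).elim (hSp V) (hTp V), ?_⟩
  rw [Finset.set_biUnion_union]
  exact union_subset_union hsS htT

lemma setOf_add_smul_mem_subsingleton (V : Submodule K M) (x : M) {v : M} (hv : v ∉ V) :
    {t : K | x + t • v ∈ V}.Subsingleton := by
  intro t₁ ht₁ t₂ ht₂
  by_contra hne
  have hdiff : (t₁ - t₂) • v ∈ V := by
    simpa [sub_smul] using V.sub_mem ht₁ ht₂
  exact hv ((V.smul_mem_iff (sub_ne_zero.2 hne)).1 hdiff)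

lemma IsThin.subset_closure_diff {𝕜 E : Type*} [NontriviallyNormedField 𝕜] [AddCommGroup E]
    [Module 𝕜 E] [TopologicalSpace E] [IsTopologicalAddGroup E] [ContinuousSMul 𝕜 E]
    {p : Submodule 𝕜 E} {s : Set E} (hs : p.IsThin s) :
    (p : Set E) ⊆ closure ((p : Set E) \ s) := by
  obtain ⟨S, hSp, hsS⟩ := hs
  intro x hx
  obtain ⟨⟨g, hgp⟩, hgS⟩ := exists_forall_notMem_of_forall_ne_top
    (fun V : S ↦ (V : Submodule 𝕜 E).comap p.subtype)
    (fun V htop ↦ hSp V V.2 fun y hy ↦ by simpa using htop.ge (mem_top (x := ⟨y, hy⟩)))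
  have hgood : ∀ᶠ t in 𝓝[≠] (0 : 𝕜), ∀ V ∈ S, x + t • g ∉ V :=
    (eventually_all_finset S).2 fun V hV ↦ nhdsNE_le_cofinite 0
      (setOf_add_smul_mem_subsingleton V x (hgS ⟨V, hV⟩)).finite.compl_mem_cofinite
  have hlim : Tendsto (fun t : 𝕜 ↦ x + t • g) (𝓝[≠] 0) (𝓝 x) := by
    have : Continuous fun t : 𝕜 ↦ x + t • g := by fun_prop
    simpa using (this.tendsto 0).mono_left nhdsWithin_le_nhds
  refine mem_closure_of_tendsto hlim (hgood.mono fun t ht ↦ ⟨p.add_mem hx (p.smul_mem t hgp), ?_⟩)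
  intro hts
  obtain ⟨V, hV, hmem⟩ := mem_iUnion₂.1 (hsS hts)
  exact ht V hV hmem

end Submodule

def LinearMap.ofInnerAdjoint {𝕜 E : Type*} [RCLike 𝕜] [NormedAddCommGroup E]
    [InnerProductSpace 𝕜 E] (f g : E → E) (hfg : ∀ x y, ⟪f x, y⟫_𝕜 = ⟪x, g y⟫_𝕜) :
    E →ₗ[𝕜] E where
  toFun := f
  map_add' x y := ext_inner_right 𝕜 fun v ↦ by simp only [hfg, inner_add_left]
  map_smul' c x := ext_inner_right 𝕜 fun v ↦ by simp only [hfg, inner_smul_left, RingHom.id_apply]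

section Invariant

variable {R M : Type*} [Ring R] [AddCommGroup M] [Module R M] {T : Module.End R M}

lemma Module.End.ker_mem_invtSubmodule_of_commute {S : Module.End R M} (hST : Commute S T) :
    LinearMap.ker S ∈ T.invtSubmodule := by
  rw [Module.End.mem_invtSubmodule]
  intro x hx
  simp only [Submodule.mem_comap, LinearMap.mem_ker] at hx ⊢
  rw [← Module.End.mul_apply, hST.eq, Module.End.mul_apply, hx, map_zero]

lemma Module.End.disjoint_sup_ker {W₁ W₂ : Submodule R M} (hW₁ : W₁ ∈ T.invtSubmodule)
    (hW₂ : W₂ ∈ T.invtSubmodule) (h₁₂ : Disjoint W₁ W₂) (h₁ : Disjoint W₁ (LinearMap.ker T))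
    (h₂ : Disjoint W₂ (LinearMap.ker T)) : Disjoint (W₁ ⊔ W₂) (LinearMap.ker T) := by
  rw [Submodule.disjoint_def] at h₁ h₂ h₁₂ ⊢
  intro w hw hTw
  obtain ⟨w₁, hw₁, w₂, hw₂, rfl⟩ := Submodule.mem_sup.1 hw
  rw [LinearMap.mem_ker, map_add, add_eq_zero_iff_eq_neg] at hTw
  have hTw₁ : T w₁ = 0 := h₁₂ _ ((T.mem_invtSubmodule_iff_forall_mem_of_mem).1 hW₁ w₁ hw₁)
    (hTw ▸ W₂.neg_mem ((T.mem_invtSubmodule_iff_forall_mem_of_mem).1 hW₂ w₂ hw₂))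
  rw [hTw₁, eq_comm, neg_eq_zero] at hTw
  rw [h₁ w₁ hw₁ hTw₁, h₂ w₂ hw₂ hTw, add_zero]

end Invariant

section Skew

variable {𝕜 E : Type*} [RCLike 𝕜] [NormedAddCommGroup E] [InnerProductSpace 𝕜 E]
  {T : Module.End 𝕜 E}

lemma apply_eq_zero_of_pow_apply_eq_zero_of_skew (hT : ∀ x y, ⟪T x, y⟫_𝕜 = -⟪x, T y⟫_𝕜)
    {k : ℕ} {x : E} (hx : (T ^ k) x = 0) : T x = 0 := by
  induction k generalizing x with
  | zero => rw [pow_zero, Module.End.one_apply] at hx; rw [hx, map_zero]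
  | succ k ih =>
    have hTTx : T (T x) = 0 := ih (by rwa [pow_succ, Module.End.mul_apply] at hx)
    rw [← inner_self_eq_zero (𝕜 := 𝕜), hT, hTTx, inner_zero_right, neg_zero]

lemma orthogonal_mem_invtSubmodule_of_skew (hT : ∀ x y, ⟪T x, y⟫_𝕜 = -⟪x, T y⟫_𝕜)
    {W : Submodule 𝕜 E} (hW : W ∈ T.invtSubmodule) : Wᗮ ∈ T.invtSubmodule := by
  rw [Module.End.mem_invtSubmodule_iff_forall_mem_of_mem] at hW ⊢
  intro x hx
  rw [Submodule.mem_orthogonal] at hx ⊢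
  intro y hy
  rw [← neg_eq_zero, ← hT, hx _ (hW y hy)]

end Skew

section CommutingSkewFamily

variable {𝕜 E : Type*} [RCLike 𝕜] [NormedAddCommGroup E] [InnerProductSpace 𝕜 E]
  {A : E → Module.End 𝕜 E} {𝔱 : Submodule 𝕜 E}

lemma isThin_of_forall_disjoint_ker_or_le_ker (hswap : ∀ x y, A x y = 0 → A y x = 0)
    {W : Submodule 𝕜 E} (hW : W ≠ ⊥) (hker : ∀ w ∈ W, (∀ h ∈ 𝔱, A h w = 0) → w = 0)
    (hdich : ∀ h ∈ 𝔱, Disjoint W (LinearMap.ker (A h)) ∨ W ≤ LinearMap.ker (A h)) :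
    𝔱.IsThin {h | h ∈ 𝔱 ∧ ¬ Disjoint W (LinearMap.ker (A h))} := by
  refine ⟨{⨅ w : W, LinearMap.ker (A w)}, ?_, ?_⟩
  · simp only [Finset.mem_singleton, forall_eq]
    intro h𝔱
    obtain ⟨w, hwW, hw0⟩ := W.ne_bot_iff.1 hW
    exact hw0 (hker w hwW fun h hh ↦ hswap _ _ ((Submodule.mem_iInf _).1 (h𝔱 hh) ⟨w, hwW⟩))
  · rintro h ⟨hh, hbad⟩
    simp only [Finset.mem_singleton, iUnion_iUnion_eq_left, SetLike.mem_coe, Submodule.mem_iInf,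
      LinearMap.mem_ker]
    exact fun w ↦ hswap _ _ ((hdich h hh).resolve_left hbad w.2)

theorem isThin_setOf_not_disjoint_ker [FiniteDimensional 𝕜 E]
    (hskew : ∀ Z x y, ⟪A Z x, y⟫_𝕜 = -⟪x, A Z y⟫_𝕜) (hswap : ∀ x y, A x y = 0 → A y x = 0)
    (hcomm : ∀ h ∈ 𝔱, ∀ h' ∈ 𝔱, Commute (A h) (A h'))
    (W : Submodule 𝕜 E) (hW : ∀ h ∈ 𝔱, W ∈ (A h).invtSubmodule)
    (hker : ∀ w ∈ W, (∀ h ∈ 𝔱, A h w = 0) → w = 0) :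
    𝔱.IsThin {h | h ∈ 𝔱 ∧ ¬ Disjoint W (LinearMap.ker (A h))} := by
  induction hn : finrank 𝕜 W using Nat.strong_induction_on generalizing W with
  | _ n ih =>
  -- If some `A h₀` is neither injective nor zero on `W`, then `W` splits into two smaller
  -- invariant pieces: its part in `ker (A h₀)` and the orthogonal complement of that part.
  by_cases hsplit : ∃ h₀ ∈ 𝔱, ¬ Disjoint W (LinearMap.ker (A h₀)) ∧ ¬ W ≤ LinearMap.ker (A h₀)
  · obtain ⟨h₀, hh₀, hbad, hnz⟩ := hsplit
    set W₁ := W ⊓ LinearMap.ker (A h₀)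
    set W₂ := W₁ᗮ ⊓ W
    have hW₁W : W₁ ≤ W := inf_le_left
    have hW₁ : ∀ h ∈ 𝔱, W₁ ∈ (A h).invtSubmodule := fun h hh ↦
      Module.End.invtSubmodule.inf_mem (hW h hh)
        (Module.End.ker_mem_invtSubmodule_of_commute (hcomm h₀ hh₀ h hh))
    have hW₂ : ∀ h ∈ 𝔱, W₂ ∈ (A h).invtSubmodule := fun h hh ↦
      Module.End.invtSubmodule.inf_mem (orthogonal_mem_invtSubmodule_of_skew (hskew h) (hW₁ h hh))
        (hW h hh)
    have hrank : finrank 𝕜 W₁ + finrank 𝕜 W₂ = n :=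
      hn ▸ Submodule.finrank_add_inf_finrank_orthogonal hW₁W
    have hW₁pos : 1 ≤ finrank 𝕜 W₁ := Submodule.one_le_finrank_iff.2 fun h ↦ hbad (disjoint_iff.2 h)
    have hW₁lt : finrank 𝕜 W₁ < n :=
      hn ▸ Submodule.finrank_lt_finrank_of_lt (lt_of_le_of_ne hW₁W fun h ↦ hnz (h ▸ inf_le_right))
    refine ((ih _ hW₁lt W₁ hW₁ (fun w hw ↦ hker w (hW₁W hw)) rfl).union
      (ih _ (by omega) W₂ hW₂ (fun w hw ↦ hker w hw.2) rfl)).mono ?_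
    rintro h ⟨hh, hbadh⟩
    by_contra hgood
    simp only [mem_union, mem_ofPred_eq, not_or, not_and, not_not] at hgood
    apply hbadh
    rw [← Submodule.sup_orthogonal_inf_of_hasOrthogonalProjection hW₁W]
    exact Module.End.disjoint_sup_ker (hW₁ h hh) (hW₂ h hh)
      ((Submodule.orthogonal_disjoint W₁).mono_right inf_le_left) (hgood.1 hh) (hgood.2 hh)
  · push Not at hsplit
    rcases eq_or_ne W ⊥ with rfl | hW0
    · exact Submodule.isThin_empty.mono fun h ⟨_, hbad⟩ ↦ hbad disjoint_bot_left
    · exact isThin_of_forall_disjoint_ker_or_le_ker hswap hW0 hker fun h hh ↦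
        or_iff_not_imp_left.2 (hsplit h hh)

end CommutingSkewFamily

section MaximalAbelian

variable {𝕜 E : Type*} [RCLike 𝕜] [NormedAddCommGroup E] [InnerProductSpace 𝕜 E]
  [FiniteDimensional 𝕜 E] {A : E → Module.End 𝕜 E} {𝔱 : Submodule 𝕜 E}

lemma mem_of_apply_eq_zero_of_disjoint_orthogonal_ker (habel : ∀ h ∈ 𝔱, ∀ x ∈ 𝔱, A h x = 0)
    {h : E} (hh : h ∈ 𝔱) (hreg : Disjoint 𝔱ᗮ (LinearMap.ker (A h))) {y : E} (hy : A h y = 0) :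
    y ∈ 𝔱 := by
  obtain ⟨p, hp, w, hw, rfl⟩ := 𝔱.exists_add_mem_mem_orthogonal y
  rw [map_add, habel h hh p hp, zero_add] at hy
  rw [Submodule.disjoint_def.1 hreg w hw hy, add_zero]
  exact hp

theorem mapsTo_of_continuous_of_apply_self_eq_zero
    (hskew : ∀ Z x y, ⟪A Z x, y⟫_𝕜 = -⟪x, A Z y⟫_𝕜) (hswap : ∀ x y, A x y = 0 → A y x = 0)
    (hcomm : ∀ h ∈ 𝔱, ∀ h' ∈ 𝔱, Commute (A h) (A h'))
    (habel : ∀ h ∈ 𝔱, ∀ x ∈ 𝔱, A h x = 0) (hcent : ∀ x, (∀ h ∈ 𝔱, A h x = 0) → x ∈ 𝔱)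
    {u : E → E} (hu : Continuous u) (hu_comm : ∀ x, A x (u x) = 0) : MapsTo u 𝔱 𝔱 := by
  have hinv : ∀ h ∈ 𝔱, 𝔱ᗮ ∈ (A h).invtSubmodule := fun h hh ↦
    orthogonal_mem_invtSubmodule_of_skew (hskew h)
      ((A h).mem_invtSubmodule_iff_forall_mem_of_mem.2 fun x hx ↦ habel h hh x hx ▸ 𝔱.zero_mem)
  have hker : ∀ w ∈ 𝔱ᗮ, (∀ h ∈ 𝔱, A h w = 0) → w = 0 := fun w hw hw0 ↦
    Submodule.disjoint_def.1 (Submodule.orthogonal_disjoint 𝔱) w (hcent w hw0) hw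
  have hreg : MapsTo u ((𝔱 : Set E) \ {h | h ∈ 𝔱 ∧ ¬ Disjoint 𝔱ᗮ (LinearMap.ker (A h))}) 𝔱 :=
    fun h ⟨hh, hgood⟩ ↦ mem_of_apply_eq_zero_of_disjoint_orthogonal_ker habel hh
      (not_not.1 fun hbad ↦ hgood ⟨hh, hbad⟩) (hu_comm h)
  intro x hx
  have := map_mem_closure hu
    ((isThin_setOf_not_disjoint_ker hskew hswap hcomm 𝔱ᗮ hinv hker).subset_closure_diff hx) hreg
  rwa [𝔱.closed_of_finiteDimensional.closure_eq] at this

theorem mapsTo_of_continuous_of_bracket_eq_zero {B : E → E → E} {H : Set E}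
    (hskew : ∀ X Y Z, ⟪B Z X, Y⟫_𝕜 + ⟪X, B Z Y⟫_𝕜 = 0) (hswap : ∀ x y, B x y = 0 → B y x = 0)
    (hjac : ∀ x y z, B x y = 0 → B x (B y z) = B y (B x z))
    (hnil : ∀ h ∈ H, ∀ x ∈ H, ∃ k, (B h)^[k] x = 0)
    (hcent : ∀ x, (∀ h ∈ H, B h x = 0) → x ∈ H)
    {u : E → E} (hu : Continuous u) (hu_comm : ∀ x, B (u x) x = 0) : MapsTo u H H := by
  let A (Z : E) : Module.End 𝕜 E := .ofInnerAdjoint (B Z) (fun y ↦ -B Z y) fun x y ↦ by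
    rw [inner_neg_right, eq_neg_iff_add_eq_zero, hskew]
  have hskewA : ∀ Z x y, ⟪A Z x, y⟫_𝕜 = -⟪x, A Z y⟫_𝕜 := fun Z x y ↦
    eq_neg_iff_add_eq_zero.2 (hskew x y Z)
  have habelH : ∀ h ∈ H, ∀ x ∈ H, A h x = 0 := fun h hh x hx ↦ by
    obtain ⟨k, hk⟩ := hnil h hh x hx
    exact apply_eq_zero_of_pow_apply_eq_zero_of_skew (hskewA h)
      ((Module.End.pow_apply _ k x).trans hk)
  have habel : ∀ h ∈ H, ∀ x ∈ Submodule.span 𝕜 H, A h x = 0 := fun h hh x hx ↦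
    (Submodule.span_le (p := LinearMap.ker (A h))).2 (habelH h hh) hx
  have hspan : (Submodule.span 𝕜 H : Set E) = H :=
    subset_antisymm (fun x hx ↦ hcent x fun h hh ↦ habel h hh x hx) Submodule.subset_span
  rw [← hspan]
  refine mapsTo_of_continuous_of_apply_self_eq_zero hskewA hswap (fun h hh h' hh' ↦ ?_)
    (fun h hh ↦ habel h (hspan ▸ hh)) (fun x hx ↦ Submodule.subset_span (hcent x fun h hh ↦
      hx h (Submodule.subset_span hh))) hu fun x ↦ hswap _ _ (hu_comm x)
  ext x
  exact hjac h h' x (habel h (hspan ▸ hh) h' hh')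

end MaximalAbelian

namespace LieSubalgebra.IsCartanSubalgebra

variable {R L : Type*} [CommRing R] [LieRing L] [LieAlgebra R L] {H : LieSubalgebra R L}

lemma mem_of_forall_lie_eq_zero (hH : H.IsCartanSubalgebra) {x : L}
    (hx : ∀ h ∈ H, ⁅h, x⁆ = 0) : x ∈ H := by
  rw [← hH.self_normalizing, H.mem_normalizer_iff]
  intro y hy
  rw [← lie_skew, hx y hy, neg_zero]
  exact H.zero_mem

lemma exists_iterate_lie_eq_zero (hH : H.IsCartanSubalgebra) {h x : L} (hh : h ∈ H)
    (hx : x ∈ H) : ∃ k, (⁅h, ·⁆)^[k] x = 0 := by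
  have := hH.nilpotent
  obtain ⟨k, hk⟩ := LieAlgebra.nilpotent_ad_of_nilpotent_algebra R H
  refine ⟨k, ?_⟩
  have hcoe := LieSubalgebra.coe_ad_pow R L H ⟨h, hh⟩ ⟨x, hx⟩ k
  rw [hk, LinearMap.zero_apply, ZeroMemClass.coe_zero, Module.End.pow_apply] at hcoe
  exact hcoe.symm

end LieSubalgebra.IsCartanSubalgebra

/- The additive structures of `NormedAddCommGroup L` and `LieRing L` are unrelated a priori, and
`0 : L` elaborates to the Lie ring's zero: this lemma says the two zeros agree. Apart from that,
the proof only uses the bracket as a function, which ad-invariance makes linear for the normed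
structure. -/
set_option linter.overlappingInstances false in
lemma norm_zero_of_inner_lie_invariant {L : Type*} [NormedAddCommGroup L]
    [InnerProductSpace ℝ L] [LieRing L] (had : ∀ X Y Z : L, ⟪⁅Z, X⁆, Y⟫ + ⟪X, ⁅Z, Y⁆⟫ = 0) :
    ‖(0 : L)‖ = 0 := by
  have h := had 0 0 0
  rw [zero_lie, real_inner_self_eq_norm_sq] at h
  exact (pow_eq_zero_iff two_ne_zero).1 (by linarith)

/-- If `u : 𝔨 → 𝔨` is a continuous map on a compact-type Lie algebra (one carrying an
`ad`-invariant inner product) with `⁅u(X), X⁆ = 0` for all `X`, then `u` maps any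
Cartan subalgebra `𝔥` into itself. -/
theorem continuous_commuting_map_preserves_cartan
    (𝔨 : Type*) [NormedAddCommGroup 𝔨] [InnerProductSpace ℝ 𝔨]
    [FiniteDimensional ℝ 𝔨] [LieRing 𝔨] [LieAlgebra ℝ 𝔨]
    (had : ∀ X Y Z : 𝔨, ⟪⁅Z, X⁆, Y⟫ + ⟪X, ⁅Z, Y⁆⟫ = 0)
    (𝔥 : LieSubalgebra ℝ 𝔨) (hCartan : 𝔥.IsCartanSubalgebra)
    (u : 𝔨 → 𝔨) (hu : Continuous u)
    (hcomm : ∀ X : 𝔨, ⁅u X, X⁆ = 0) :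
    ∀ X ∈ 𝔥, u X ∈ 𝔥 := by
  have hzero := norm_eq_zero.mp (norm_zero_of_inner_lie_invariant had)
  -- the side conditions come with the normed zero; `hzero` turns them into Lie-ring statements
  refine fun X hX ↦ mapsTo_of_continuous_of_bracket_eq_zero (B := fun x y ↦ ⁅x, y⁆) (H := 𝔥)
    had ?_ ?_ ?_ ?_ hu ?_ hX <;> simp only [← hzero]
  · intro x y hxy
    rw [← lie_skew, hxy, neg_zero]
  · intro x y z hxy
    rw [leibniz_lie, hxy, zero_lie, zero_add]
  · exact fun h hh x hx ↦ hCartan.exists_iterate_lie_eq_zero hh hx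
  · exact fun x hx ↦ hCartan.mem_of_forall_lie_eq_zero hx
  · exact hcomm
end

section
/- Let E be a finite-dimensional real inner product space and let h : E → ℝ be smooth (C^∞) with Hessian uniformly bounded below: there is c > 0 such that ⟨H(Y)v, v⟩ ≥ c‖v‖² for all Y, v ∈ E, where H(Y) is the Hessian operator of h at Y. Then the gradient map u = ∇h : E → E is a C^∞ diffeomorphism of E onto E, i.e. u is a smooth bijection of E onto itself with smooth inverse. -/
open scoped RealInnerProductSpace

/-- For a smooth function `h` on a finite-dimensional real inner product space whose
Hessian is uniformly bounded below by `c > 0`, the gradient map `u = ∇h` is a smooth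
diffeomorphism of `E` onto itself: a smooth bijection with smooth inverse. -/
theorem gradient_map_is_smooth_diffeomorphism
    (E : Type*) [NormedAddCommGroup E] [InnerProductSpace ℝ E] [FiniteDimensional ℝ E]
    (h : E → ℝ) (hsm : ContDiff ℝ (⊤ : ℕ∞) h)
    (H : E → E →L[ℝ] E)
    (hH : ∀ Y v w : E, ⟪H Y v, w⟫ = fderiv ℝ (fderiv ℝ h) Y v w)
    (c : ℝ) (hc : 0 < c)
    (hbd : ∀ Y v : E, c * ‖v‖ ^ 2 ≤ ⟪H Y v, v⟫) :
    ContDiff ℝ (⊤ : ℕ∞) (fun Y : E => gradient h Y) ∧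
    Function.Bijective (fun Y : E => gradient h Y) ∧
    ∃ g : E → E, ContDiff ℝ (⊤ : ℕ∞) g ∧
      (∀ Y : E, g (gradient h Y) = Y) ∧ (∀ Z : E, gradient h (g Z) = Z) := by
  set u : E → E := fun Y => gradient h Y with hu_def
  -- Smoothness of the gradient map
  have hd1 : ContDiff ℝ (⊤ : ℕ∞) (fderiv ℝ h) := hsm.fderiv_right (by simp)
  set T : (StrongDual ℝ E) ≃ₗᵢ[ℝ] E := (InnerProductSpace.toDual ℝ E).symm with hT
  have hu : ContDiff ℝ (⊤ : ℕ∞) u := T.contDiff.comp hd1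
  -- The derivative of the gradient map is the Hessian
  have hfd : ∀ Y : E, HasFDerivAt u (H Y) Y := by
    intro Y
    have h2 : HasFDerivAt (fderiv ℝ h) (fderiv ℝ (fderiv ℝ h) Y) Y :=
      (hd1.differentiable (by simp)).differentiableAt.hasFDerivAt
    have h3 : HasFDerivAt u
        ((T.toContinuousLinearEquiv : (StrongDual ℝ E) →L[ℝ] E).comp
          (fderiv ℝ (fderiv ℝ h) Y)) Y :=
      (T.toContinuousLinearEquiv.hasFDerivAt).comp Y h2
    convert h3 using 1
    ext v
    apply ext_inner_left ℝ
    intro w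
    rw [real_inner_comm, hH Y v w]
    simp [T, real_inner_comm]
    rw [real_inner_comm]
    exact (InnerProductSpace.toDual_symm_apply).symm
  -- Strong monotonicity of the gradient map
  have mono : ∀ X Y : E, c * ‖Y - X‖ ^ 2 ≤ ⟪u Y - u X, Y - X⟫ := by
    intro X Y
    set v := Y - X with hv
    set f : ℝ → ℝ := fun t => ⟪u (X + t • v), v⟫ - c * ‖v‖ ^ 2 * t with hf
    have hder : ∀ t : ℝ, HasDerivAt f (⟪H (X + t • v) v, v⟫ - c * ‖v‖ ^ 2) t := by
      intro t
      have hline : HasDerivAt (fun t : ℝ => X + t • v) v t := by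
        simpa using ((hasDerivAt_id t).smul_const v).const_add X
      have h1 : HasDerivAt (fun t : ℝ => u (X + t • v)) (H (X + t • v) v) t := by
        exact (hfd (X + t • v)).comp_hasDerivAt t hline
      have h2 := (h1.inner ℝ (hasDerivAt_const t v))
      exact (h2.sub (((hasDerivAt_id t).const_mul (c * ‖v‖ ^ 2)))).congr_deriv (by simp)
    have hmono : Monotone f :=
      monotone_of_deriv_nonneg (fun t => (hder t).differentiableAt)
        (fun t => by rw [(hder t).deriv]; linarith [hbd (X + t • v) v])
    have h01 := hmono (zero_le_one)
    simp only [hf, zero_smul, add_zero, one_smul, mul_one, mul_zero, sub_zero] at h01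
    rw [hv] at h01 ⊢
    rw [inner_sub_left]
    have : X + (Y - X) = Y := by abel
    rw [this] at h01
    linarith
  -- Injectivity
  have huinj : Function.Injective u := by
    intro X Y hXY
    have := mono X Y
    rw [hXY, sub_self, inner_zero_left] at this
    have h2 : ‖Y - X‖ ^ 2 = 0 := le_antisymm (by nlinarith) (sq_nonneg _)
    have h3 : Y - X = 0 := norm_eq_zero.mp ((pow_eq_zero_iff two_ne_zero).mp h2)
    have := sub_eq_zero.mp h3
    exact this.symm
  -- Surjectivity
  have hdiff : Differentiable ℝ h := hsm.differentiable (by simp)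
  have hfdh : ∀ x : E, HasFDerivAt h (InnerProductSpace.toDual ℝ E (gradient h x)) x := fun x =>
    (hdiff x).hasFDerivAt.hasGradientAt.hasFDerivAt
  have key : ∀ Y : E, h 0 + ⟪u 0, Y⟫ + c / 2 * ‖Y‖ ^ 2 ≤ h Y := by
    intro Y
    set G : ℝ → ℝ := fun t => h (t • Y) - t * ⟪u 0, Y⟫ - c / 2 * ‖Y‖ ^ 2 * t ^ 2 with hG
    have hder : ∀ t : ℝ, HasDerivAt G
        (⟪u (t • Y), Y⟫ - ⟪u 0, Y⟫ - c * ‖Y‖ ^ 2 * t) t := by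
      intro t
      have hline : HasDerivAt (fun t : ℝ => t • Y) Y t := by
        simpa using (hasDerivAt_id t).smul_const Y
      have h1 : HasDerivAt (fun t : ℝ => h (t • Y)) (⟪u (t • Y), Y⟫) t := by
        have := (hfdh (t • Y)).comp_hasDerivAt t hline
        rw [InnerProductSpace.toDual_apply_apply] at this
        exact this
      have h2 : HasDerivAt (fun t : ℝ => t * ⟪u 0, Y⟫) (⟪u 0, Y⟫) t := by
        simpa using (hasDerivAt_id t).mul_const (⟪u 0, Y⟫ : ℝ)
      have h3 : HasDerivAt (fun t : ℝ => c / 2 * ‖Y‖ ^ 2 * t ^ 2)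
          (c / 2 * ‖Y‖ ^ 2 * (2 * t)) t := by
        simpa using ((hasDerivAt_pow 2 t)).const_mul (c / 2 * ‖Y‖ ^ 2)
      have := (h1.sub h2).sub h3
      exact this.congr_deriv (by ring)
    have hmonoG : MonotoneOn G (Set.Ici (0 : ℝ)) := by
      apply monotoneOn_of_deriv_nonneg (convex_Ici 0)
        (fun t _ => (hder t).differentiableAt.continuousAt.continuousWithinAt)
        (fun t _ => ((hder t).differentiableAt).differentiableWithinAt)
      intro t ht
      rw [interior_Ici] at ht
      rw [(hder t).deriv]
      have h0 := mono 0 (t • Y)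
      simp only [sub_zero] at h0
      rw [real_inner_smul_right, norm_smul] at h0
      have ht' : (0 : ℝ) < t := ht
      have hnt : ‖t‖ = t := by rw [Real.norm_eq_abs]; exact abs_of_pos ht'
      rw [hnt, inner_sub_left] at h0
      nlinarith [sq_nonneg ‖Y‖, sq_nonneg t, mul_pos ht' ht']
    have h01 := hmonoG (Set.self_mem_Ici) (Set.mem_Ici.mpr zero_le_one) zero_le_one
    simp only [hG, zero_smul, one_smul, zero_mul, mul_zero, sub_zero, zero_pow, one_pow,
      mul_one] at h01
    linarith
  have husurj : Function.Surjective u := by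
    intro Z
    set φ : E → ℝ := fun Y => h Y - ⟪Z, Y⟫ with hφ
    have hφc : Continuous φ := hdiff.continuous.sub ((innerSL ℝ Z).continuous)
    set R : ℝ := (2 * ‖u 0 - Z‖ + 2) / c with hR
    have hRpos : 0 < R := by positivity
    obtain ⟨Y₀, hY₀mem, hY₀min⟩ :=
      (isCompact_closedBall (0 : E) (R + 1)).exists_isMinOn
        ⟨0, by simp; positivity⟩ hφc.continuousOn
    have hφ0 : φ Y₀ ≤ φ 0 := hY₀min (by simp; positivity)
    have hlarge : ∀ Y : E, R ≤ ‖Y‖ → φ 0 < φ Y := by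
      intro Y hY
      have hk := key Y
      have hcs : ⟪u 0 - Z, Y⟫ ≥ -(‖u 0 - Z‖ * ‖Y‖) := by
        linarith [abs_real_inner_le_norm (u 0 - Z) Y, neg_abs_le (⟪u 0 - Z, Y⟫ : ℝ)]
      have hYR : (2 * ‖u 0 - Z‖ + 2) ≤ c * ‖Y‖ := by
        rw [hR] at hY
        calc (2 * ‖u 0 - Z‖ + 2) = c * ((2 * ‖u 0 - Z‖ + 2) / c) := by field_simp
          _ ≤ c * ‖Y‖ := by apply mul_le_mul_of_nonneg_left hY (le_of_lt hc)
      have hφY : φ Y = h Y - ⟪Z, Y⟫ := rfl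
      have h0Y : φ 0 = h 0 := by simp [hφ]
      have expand : ⟪u 0, Y⟫ - ⟪Z, Y⟫ = ⟪u 0 - Z, Y⟫ := by rw [inner_sub_left]
      have hnormY : 0 < ‖Y‖ := lt_of_lt_of_le hRpos hY
      have : φ Y - φ 0 ≥ ⟪u 0 - Z, Y⟫ + c / 2 * ‖Y‖ ^ 2 := by
        rw [hφY, h0Y]; linarith [key Y, expand]
      nlinarith [sq_nonneg ‖Y‖]
    have hY₀lt : ‖Y₀‖ < R := by
      by_contra hcon
      push_neg at hcon
      exact absurd hφ0 (not_le.mpr (hlarge Y₀ hcon))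
    have hloc : IsLocalMin φ Y₀ := by
      apply hY₀min.isLocalMin
      apply Filter.mem_of_superset
        (Metric.ball_mem_nhds Y₀ (by linarith : (0:ℝ) < R + 1 - ‖Y₀‖))
      intro y hy
      simp only [Metric.mem_ball] at hy
      simp only [Metric.mem_closedBall, dist_zero_right]
      have h1 : ‖y‖ ≤ dist y Y₀ + ‖Y₀‖ := by
        rw [dist_eq_norm]
        simpa using norm_add_le (y - Y₀) Y₀
      linarith
    have hφd : HasFDerivAt φ (InnerProductSpace.toDual ℝ E (gradient h Y₀) - innerSL ℝ Z) Y₀ :=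
      (hfdh Y₀).sub ((innerSL ℝ Z).hasFDerivAt)
    have hzero : InnerProductSpace.toDual ℝ E (gradient h Y₀) - innerSL ℝ Z = 0 := hloc.hasFDerivAt_eq_zero hφd
    refine ⟨Y₀, ?_⟩
    apply ext_inner_right ℝ
    intro w
    have := congrArg (fun L : E →L[ℝ] ℝ => L w) hzero
    simp only [ContinuousLinearMap.sub_apply, ContinuousLinearMap.zero_apply, InnerProductSpace.toDual_apply_apply,
      innerSL_apply_apply] at this
    linarith
  refine ⟨hu, ⟨huinj, husurj⟩, ?_⟩
  -- Smooth inverse via the inverse function theorem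
  set g : E → E := Function.invFun u with hg
  have hgl : Function.LeftInverse g u := Function.leftInverse_invFun huinj
  have hgr : Function.RightInverse g u := Function.rightInverse_invFun husurj
  refine ⟨g, ?_, hgl, hgr⟩
  rw [contDiff_iff_contDiffAt]
  intro Z
  obtain ⟨Y, rfl⟩ := husurj Z
  have hinj : Function.Injective ((H Y) : E →ₗ[ℝ] E) := by
    rw [← LinearMap.ker_eq_bot, LinearMap.ker_eq_bot']
    intro v hv
    rw [ContinuousLinearMap.coe_coe] at hv
    have h1 := hbd Y v
    rw [hv, inner_zero_left] at h1
    have h2 : ‖v‖ ^ 2 = 0 := le_antisymm (by nlinarith) (sq_nonneg _)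
    exact norm_eq_zero.mp ((pow_eq_zero_iff two_ne_zero).mp h2)
  have hsurj : Function.Surjective ((H Y) : E →ₗ[ℝ] E) :=
    (LinearMap.injective_iff_surjective).mp hinj
  set le : E ≃ₗ[ℝ] E := LinearEquiv.ofBijective ((H Y) : E →ₗ[ℝ] E) ⟨hinj, hsurj⟩ with hle
  set e : E ≃L[ℝ] E := le.toContinuousLinearEquiv with he
  have hee : (e : E →L[ℝ] E) = H Y := by ext v; rfl
  have hfd' : HasFDerivAt u (e : E →L[ℝ] E) Y := hee ▸ hfd Y
  have hn : ((⊤ : ℕ∞) : WithTop ℕ∞) ≠ 0 := by simp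
  have hℓ : ContDiffAt ℝ (⊤ : ℕ∞) ((hu.contDiffAt).localInverse hfd' hn) (u Y) :=
    ContDiffAt.to_localInverse (hu.contDiffAt) hfd' hn
  apply hℓ.congr_of_eventuallyEq
  have hev : ∀ᶠ z in nhds (u Y), u (((hu.contDiffAt).localInverse hfd' hn) z) = z :=
    ((hu.contDiffAt).hasStrictFDerivAt' hfd' hn).eventually_right_inverse
  filter_upwards [hev] with z hz
  calc g z = g (u (((hu.contDiffAt).localInverse hfd' hn) z)) := by rw [hz]
    _ = ((hu.contDiffAt).localInverse hfd' hn) z := hgl _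
end

section
/- Let h : ℝ → ℝ satisfy h(y) ≥ c₀ + v₀·y + c₂·y² for all y ∈ ℝ, for some constants c₀, v₀ ∈ ℝ and c₂ > 0. Let τ₁ ∈ ℝ and τ₂ > 0. Then: (i) sup_{n∈ℤ} e^{−τ₂ h(−n)} is finite, and there is a unique bounded linear operator T on L²(𝕋) (𝕋 the circle ℝ/2πℤ with normalized Haar measure) satisfying T e_n = e^{(iτ₁ − τ₂) h(−n)} e_n for every n ∈ ℤ, where e_n(x) = e^{inx}; the operator norm of T equals sup_{n∈ℤ} e^{−τ₂ h(−n)}. (ii) For every f ∈ L²(𝕋), the series F(z) = Σ_{n∈ℤ} e^{(iτ₁ − τ₂) h(−n)} f̂(n) e^{inz} converges locally uniformly on all of ℂ, so F is an entire function, and the restriction of F to ℝ descends to a function on 𝕋 equal to Tf almost everywhere. In particular T maps square-integrable functions to real-analytic functions. -/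
/-!
In the Fourier basis `e_n`, a Hilbert basis of `L²(𝕋)`, `T` is the diagonal operator with
eigenvalues `w_n = e^{(iτ₁ - τ₂) h(-n)}`. A diagonal operator with bounded eigenvalues is bounded,
has norm `sup |w_n|`, and is determined by its values on the basis.

The quadratic lower bound on `h` gives `|w_n| ≤ C e^{-τ₂ c₂ n² + τ₂ |v₀| |n|}`, Gaussian decay that
beats every exponential `e^{R |n|}`. As `|f̂ n| ≤ ‖f‖₂` and `|e^{inz}| ≤ e^{|n| |z|}`, the series
for `F` is dominated on compact sets by a summable sequence, so it converges locally uniformly to an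
entire function. Its coefficients are summable, so on `ℝ` it is the uniformly convergent Fourier
series of `Tf`, which agrees with `Tf` in `L²`.
-/

open MeasureTheory Filter Complex
open scoped ENNReal

instance : Fact (0 < 2 * Real.pi) := ⟨by positivity⟩

namespace lp

variable {ι 𝕜 : Type*} [RCLike 𝕜] {p : ℝ≥0∞} {w : ι → 𝕜}

theorem memℓp_mul_of_bddAbove (hw : BddAbove (Set.range fun i => ‖w i‖))
    (x : lp (fun _ : ι => 𝕜) p) : Memℓp (fun i => w i * x i) p :=
  ((lp.memℓp x).norm.const_mul (⨆ i, ‖w i‖)).mono fun i => by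
    rw [norm_mul]
    exact mul_le_mul_of_nonneg_right (le_ciSup hw i) (norm_nonneg _)

variable [Fact (1 ≤ p)]

noncomputable def diagonal (w : ι → 𝕜) (hw : BddAbove (Set.range fun i => ‖w i‖)) :
    lp (fun _ : ι => 𝕜) p →L[𝕜] lp (fun _ : ι => 𝕜) p :=
  LinearMap.mkContinuous
    { toFun x := ⟨fun i => w i * x i, memℓp_mul_of_bddAbove hw x⟩
      map_add' x y := by ext i; exact mul_add (w i) (x i) (y i)
      map_smul' c x := by ext i; simp [mul_left_comm] }
    (⨆ i, ‖w i‖) fun x => by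
      have hS : 0 ≤ ⨆ i, ‖w i‖ := Real.iSup_nonneg fun _ => norm_nonneg _
      calc _ ≤ ‖((⨆ i, ‖w i‖ : ℝ) : 𝕜) • x‖ := by
            refine lp.norm_mono (zero_lt_one.trans_le Fact.out).ne' fun i => ?_
            simp only [lp.coeFn_smul, Pi.smul_apply, smul_eq_mul, norm_mul,
              RCLike.norm_of_nonneg hS]
            change ‖w i * x i‖ ≤ _
            rw [norm_mul]
            exact mul_le_mul_of_nonneg_right (le_ciSup hw i) (norm_nonneg _)
        _ = (⨆ i, ‖w i‖) * ‖x‖ := by rw [norm_smul, RCLike.norm_of_nonneg hS]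

theorem diagonal_apply (hw : BddAbove (Set.range fun i => ‖w i‖)) (x : lp (fun _ : ι => 𝕜) p)
    (i : ι) : diagonal w hw x i = w i * x i :=
  rfl

theorem norm_diagonal_le (hw : BddAbove (Set.range fun i => ‖w i‖)) :
    ‖(diagonal w hw : lp (fun _ : ι => 𝕜) p →L[𝕜] _)‖ ≤ ⨆ i, ‖w i‖ :=
  LinearMap.mkContinuous_norm_le _ (Real.iSup_nonneg fun _ => norm_nonneg _) _

end lp

namespace HilbertBasis

variable {ι 𝕜 E : Type*} [RCLike 𝕜] [NormedAddCommGroup E] [InnerProductSpace 𝕜 E]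
  (b : HilbertBasis ι 𝕜 E) {w : ι → 𝕜} (hw : BddAbove (Set.range fun i => ‖w i‖))

noncomputable def diagonal : E →L[𝕜] E :=
  (b.repr.symm : lp (fun _ : ι => 𝕜) 2 →L[𝕜] E) ∘L lp.diagonal w hw ∘L
    (b.repr : E →L[𝕜] lp (fun _ : ι => 𝕜) 2)

theorem repr_diagonal (x : E) (i : ι) : b.repr (b.diagonal hw x) i = w i * b.repr x i := by
  simp [diagonal, lp.diagonal_apply]

theorem diagonal_apply_self (i : ι) : b.diagonal hw (b i) = w i • b i := by
  classical
  refine b.repr.injective (lp.ext (funext fun j => ?_))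
  rw [repr_diagonal, map_smul, b.repr_self]
  by_cases hj : j = i <;> simp [hj, lp.single_apply]

theorem eq_diagonal_of_apply_self {T : E →L[𝕜] E} (hT : ∀ i, T (b i) = w i • b i) :
    T = b.diagonal hw := by
  refine ContinuousLinearMap.ext_on
    (Submodule.dense_iff_topologicalClosure_eq_top.mpr b.dense_span) ?_
  rintro _ ⟨i, rfl⟩
  rw [hT, diagonal_apply_self]

theorem norm_diagonal : ‖b.diagonal hw‖ = ⨆ i, ‖w i‖ := by
  refine le_antisymm ?_ (Real.iSup_le (fun i => ?_) (norm_nonneg _))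
  · refine ContinuousLinearMap.opNorm_le_bound _ (Real.iSup_nonneg fun _ => norm_nonneg _)
      fun x => ?_
    calc ‖b.diagonal hw x‖ = ‖lp.diagonal w hw (b.repr x)‖ := b.repr.symm.norm_map _
      _ ≤ (⨆ i, ‖w i‖) * ‖b.repr x‖ := (lp.diagonal w hw).le_of_opNorm_le
          (lp.norm_diagonal_le hw) _
      _ = (⨆ i, ‖w i‖) * ‖x‖ := by rw [b.repr.norm_map]
  · calc ‖w i‖ = ‖b.diagonal hw (b i)‖ := by
          rw [diagonal_apply_self, norm_smul, b.orthonormal.1 i, mul_one]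
      _ ≤ ‖b.diagonal hw‖ := (b.diagonal hw).unit_le_opNorm _ (b.orthonormal.1 i).le

end HilbertBasis

section Fourier

variable {T : ℝ} [Fact (0 < T)]

theorem norm_fourierCoeff_le (f : Lp ℂ 2 (@AddCircle.haarAddCircle T _)) (n : ℤ) :
    ‖fourierCoeff f n‖ ≤ ‖f‖ := by
  rw [← fourierBasis_repr, ← fourierBasis.repr.norm_map f]
  exact lp.norm_apply_le_norm two_ne_zero _ n

theorem eq_toLp_tsum_fourier_of_summable (f : Lp ℂ 2 (@AddCircle.haarAddCircle T _))
    (hf : Summable (fourierCoeff f)) :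
    f = ContinuousMap.toLp (E := ℂ) 2 AddCircle.haarAddCircle ℂ
      (∑' n, fourierCoeff f n • fourier n) := by
  have hsum : Summable fun n => fourierCoeff f n • (fourier n : C(AddCircle T, ℂ)) :=
    .of_norm (by simpa only [norm_smul, fourier_norm, mul_one] using hf.norm)
  have h1 := (ContinuousMap.toLp (E := ℂ) 2 (@AddCircle.haarAddCircle T _) ℂ).hasSum hsum.hasSum
  refine (hasSum_fourier_series_L2 f).unique ?_
  simpa only [Function.comp_def, map_smul] using h1

end Fourier

theorem norm_cexp_I_mul_intCast_mul_le (n : ℤ) (z : ℂ) :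
    ‖cexp (I * n * z)‖ ≤ Real.exp (‖z‖ * |(n : ℝ)|) := by
  rw [norm_exp]
  gcongr
  calc (I * n * z).re = -(n * z.im) := by simp
    _ ≤ |(n : ℝ)| * |z.im| := (neg_le_abs _).trans_eq (abs_mul _ _)
    _ ≤ ‖z‖ * |(n : ℝ)| := by rw [mul_comm]; gcongr; exact abs_im_le_norm z

theorem fourier_coe_two_pi_apply (n : ℤ) (x : ℝ) :
    fourier n (x : AddCircle (2 * Real.pi)) = cexp (I * n * x) := by
  rw [fourier_coe_apply]
  congr 1
  push_cast
  field_simp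

section EntireFourierSeries

variable {c : ℤ → ℂ}

theorem tendstoLocallyUniformly_sum_mul_cexp
    (hc : ∀ R : ℝ, Summable fun n : ℤ => ‖c n‖ * Real.exp (R * |(n : ℝ)|)) :
    TendstoLocallyUniformly (fun (s : Finset ℤ) (z : ℂ) => ∑ n ∈ s, c n * cexp (I * n * z))
      (fun z => ∑' n, c n * cexp (I * n * z)) atTop := by
  rw [tendstoLocallyUniformly_iff_forall_isCompact]
  intro K hK
  obtain ⟨R, hR⟩ := hK.isBounded.subset_closedBall 0
  refine tendstoUniformlyOn_tsum (hc R) fun n z hz => ?_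
  rw [norm_mul]
  gcongr
  refine (norm_cexp_I_mul_intCast_mul_le n z).trans ?_
  gcongr
  simpa using hR hz

theorem differentiable_tsum_mul_cexp
    (hc : ∀ R : ℝ, Summable fun n : ℤ => ‖c n‖ * Real.exp (R * |(n : ℝ)|)) :
    Differentiable ℂ fun z => ∑' n, c n * cexp (I * n * z) := by
  rw [← differentiableOn_univ]
  refine (tendstoLocallyUniformlyOn_univ.mpr
    (tendstoLocallyUniformly_sum_mul_cexp hc)).differentiableOn
    (Eventually.of_forall fun s => Differentiable.differentiableOn ?_) isOpen_univ
  fun_prop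

theorem exists_entire_ae_eq_of_fourierCoeff
    (hc : ∀ R : ℝ, Summable fun n : ℤ => ‖c n‖ * Real.exp (R * |(n : ℝ)|))
    (f : Lp ℂ 2 (@AddCircle.haarAddCircle (2 * Real.pi) _)) (hf : fourierCoeff f = c) :
    ∃ F : ℂ → ℂ,
      TendstoLocallyUniformly (fun (s : Finset ℤ) (z : ℂ) => ∑ n ∈ s, c n * cexp (I * n * z))
        F atTop ∧
      Differentiable ℂ F ∧
      ∃ hper : Function.Periodic (fun x : ℝ => F x) (2 * Real.pi),
        f =ᵐ[AddCircle.haarAddCircle] hper.lift := by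
  have hsum : Summable c := .of_norm (by simpa using hc 0)
  set G : C(AddCircle (2 * Real.pi), ℂ) := ∑' n, c n • fourier n
  have hG (x : ℝ) : G x = ∑' n, c n * cexp (I * n * x) := by
    have hsumG : Summable fun n => c n • (fourier n : C(AddCircle (2 * Real.pi), ℂ)) :=
      .of_norm (by simpa only [norm_smul, fourier_norm, mul_one] using hsum.norm)
    calc G x = ∑' n, (c n • fourier n : C(AddCircle (2 * Real.pi), ℂ)) x :=
          ((ContinuousMap.evalCLM ℂ _).hasSum hsumG.hasSum).tsum_eq.symm
      _ = _ := tsum_congr fun n => by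
          rw [ContinuousMap.smul_apply, fourier_coe_two_pi_apply, smul_eq_mul]
  have hper : Function.Periodic (fun x : ℝ => ∑' n, c n * cexp (I * n * x)) (2 * Real.pi) :=
    fun x => by simp only [← hG, AddCircle.coe_add_period]
  refine ⟨_, tendstoLocallyUniformly_sum_mul_cexp hc, differentiable_tsum_mul_cexp hc, hper, ?_⟩
  have hlift : hper.lift = G := funext fun y =>
    QuotientAddGroup.induction_on y fun x => (hper.lift_coe x).trans (hG x).symm
  have hfG : f = ContinuousMap.toLp (E := ℂ) 2 AddCircle.haarAddCircle ℂ G := by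
    rw [eq_toLp_tsum_fourier_of_summable f (hf ▸ hsum), hf]
  rw [hlift, hfG]
  exact ContinuousMap.coeFn_toLp _ G

end EntireFourierSeries

theorem norm_cexp_mul_I_sub_mul_ofReal (τ₁ τ₂ r : ℝ) :
    ‖cexp ((τ₁ * I - τ₂) * r)‖ = Real.exp (-τ₂ * r) := by
  rw [norm_exp]
  congr 1
  simp

theorem summable_exp_neg_mul_sq_add_mul_abs {A : ℝ} (hA : 0 < A) (B : ℝ) :
    Summable fun n : ℤ => Real.exp (-A * n ^ 2 + B * |(n : ℝ)|) := by
  refine (summable_pow_mul_jacobiTheta₂_term_bound (B / (2 * Real.pi))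
    (div_pos hA Real.pi_pos) 0).congr fun n => ?_
  rw [pow_zero, one_mul, Int.cast_abs]
  congr 1
  field_simp
  ring

theorem summable_exp_mul_exp_abs_of_quadratic_lower_bound {h : ℝ → ℝ} {c₀ v₀ c₂ τ : ℝ}
    (hc₂ : 0 < c₂) (hbound : ∀ y, c₀ + v₀ * y + c₂ * y ^ 2 ≤ h y) (hτ : 0 < τ) (R : ℝ) :
    Summable fun n : ℤ => Real.exp (-τ * h n) * Real.exp (R * |(n : ℝ)|) := by
  refine ((summable_exp_neg_mul_sq_add_mul_abs (mul_pos hτ hc₂) (τ * |v₀| + R)).mul_left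
    (Real.exp (-τ * c₀))).of_nonneg_of_le (fun n => by positivity) fun n => ?_
  rw [← Real.exp_add, ← Real.exp_add, Real.exp_le_exp]
  have hlin : -(|v₀| * |(n : ℝ)|) ≤ v₀ * n := abs_mul v₀ n ▸ neg_abs_le (v₀ * n)
  nlinarith [mul_le_mul_of_nonneg_left (hbound n) hτ.le, mul_le_mul_of_nonneg_left hlin hτ.le]

/-- For `K = S¹` and a complexifier `h` with a quadratic lower bound, the operator
`T = e^{iτQ(h)}` (with `τ = τ₁ + iτ₂`, `τ₂ > 0`), acting diagonally on the Fourier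
basis by `T e_n = e^{(iτ₁ − τ₂)h(−n)} e_n`, is a well-defined bounded operator on
`L²(𝕋)` of norm `sup_n e^{−τ₂ h(−n)}`, and it maps every `f ∈ L²(𝕋)` to (the
restriction to `𝕋` of) an entire function given by a locally uniformly convergent
series `F(z) = Σ_n e^{(iτ₁−τ₂)h(−n)} f̂(n) e^{inz}`. -/
theorem heisenberg_complex_time_contraction_circle
    (h : ℝ → ℝ) (c₀ v₀ c₂ : ℝ) (hc₂ : 0 < c₂)
    (hbound : ∀ y : ℝ, c₀ + v₀ * y + c₂ * y ^ 2 ≤ h y)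
    (τ₁ τ₂ : ℝ) (hτ₂ : 0 < τ₂) :
    BddAbove (Set.range fun n : ℤ => Real.exp (-τ₂ * h (-(n : ℝ)))) ∧
    ∃ T : Lp ℂ 2 (@AddCircle.haarAddCircle (2 * Real.pi) _) →L[ℂ]
          Lp ℂ 2 (@AddCircle.haarAddCircle (2 * Real.pi) _),
      (∀ n : ℤ, T (fourierLp 2 n) =
        Complex.exp (((τ₁ : ℂ) * Complex.I - (τ₂ : ℂ)) * (h (-(n : ℝ)) : ℂ)) • fourierLp 2 n) ∧
      (∀ T' : Lp ℂ 2 (@AddCircle.haarAddCircle (2 * Real.pi) _) →L[ℂ]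
          Lp ℂ 2 (@AddCircle.haarAddCircle (2 * Real.pi) _),
        (∀ n : ℤ, T' (fourierLp 2 n) =
          Complex.exp (((τ₁ : ℂ) * Complex.I - (τ₂ : ℂ)) * (h (-(n : ℝ)) : ℂ)) • fourierLp 2 n) →
        T' = T) ∧
      (‖T‖ = ⨆ n : ℤ, Real.exp (-τ₂ * h (-(n : ℝ)))) ∧
      (∀ f : Lp ℂ 2 (@AddCircle.haarAddCircle (2 * Real.pi) _),
        ∃ F : ℂ → ℂ,
          TendstoLocallyUniformly
            (fun (s : Finset ℤ) (z : ℂ) =>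
              ∑ n ∈ s,
                Complex.exp (((τ₁ : ℂ) * Complex.I - (τ₂ : ℂ)) * (h (-(n : ℝ)) : ℂ)) *
                  fourierCoeff (⇑f) n * Complex.exp (Complex.I * (n : ℂ) * z))
            F atTop ∧
          Differentiable ℂ F ∧
          ∃ hper : Function.Periodic (fun x : ℝ => F (x : ℂ)) (2 * Real.pi),
            ⇑(T f) =ᵐ[@AddCircle.haarAddCircle (2 * Real.pi) _] hper.lift) := by
  set w : ℤ → ℂ := fun n => cexp ((τ₁ * I - τ₂) * h (-(n : ℝ)))
  have hw_norm (n : ℤ) : ‖w n‖ = Real.exp (-τ₂ * h (-(n : ℝ))) :=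
    norm_cexp_mul_I_sub_mul_ofReal _ _ _
  have hdecay (R : ℝ) : Summable fun n : ℤ => ‖w n‖ * Real.exp (R * |(n : ℝ)|) := by
    simp only [hw_norm]
    exact summable_exp_mul_exp_abs_of_quadratic_lower_bound (h := fun y => h (-y)) (v₀ := -v₀)
      hc₂ (fun y => by simpa using hbound (-y)) hτ₂ R
  have hbdd : BddAbove (Set.range fun n => ‖w n‖) := by
    simpa using (hdecay 0).tendsto_cofinite_zero.bddAbove_range_of_cofinite
  simp only [← hw_norm]
  refine ⟨hbdd, fourierBasis.diagonal hbdd, fun n => ?_, fun T' hT' => ?_,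
    fourierBasis.norm_diagonal hbdd, fun f => ?_⟩
  · rw [← coe_fourierBasis]
    exact fourierBasis.diagonal_apply_self hbdd n
  · refine fourierBasis.eq_diagonal_of_apply_self hbdd fun n => ?_
    rw [coe_fourierBasis]
    exact hT' n
  · refine exists_entire_ae_eq_of_fourierCoeff (c := fun n => w n * fourierCoeff f n)
      (fun R => ?_) _ (funext fun n => ?_)
    · refine ((hdecay R).mul_left ‖f‖).of_nonneg_of_le (fun n => by positivity) fun n => ?_
      calc ‖w n * fourierCoeff f n‖ * Real.exp (R * |(n : ℝ)|)
          = ‖fourierCoeff f n‖ * (‖w n‖ * Real.exp (R * |(n : ℝ)|)) := by rw [norm_mul]; ring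
        _ ≤ ‖f‖ * (‖w n‖ * Real.exp (R * |(n : ℝ)|)) := by
          gcongr
          exact norm_fourierCoeff_le f n
    · rw [← fourierBasis_repr, HilbertBasis.repr_diagonal, fourierBasis_repr]
end
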